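/- There exists a family of functions in F_energy (argmins of sums of energy functions) that is not expressible in F_mask: specifically, for one-dimensional x with E(x, z₁) = (x-2)², E(x, z₂) = (x-3)², E(x, z₃) = (x-4)², the map sending a component set to the argmin of the summed energies assigns different values to {z₁, z₂} and {z₁, z₃}, whereas any mask-based composition Σ_z m(z) f(z) with consistent masks assigns, on any coordinate where m(z₁) = 1, a value depending only on z₁. -/
import Mathlib


/-- The one-dimensional energy composition with `E(x, zᵢ) = (x - (i+2))²` for
components `i = 0, 1, 2` (values `2, 3, 4`) yields argmins `5/2` on `{z₀, z₁}` and
`3` on `{z₀, z₂}`, which are distinct; no mask-based (additive) composition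
`S ↦ ∑_{i ∈ S} m i * f i` with `{0,1}`-valued masks can reproduce all these
argmins, so this energy composition is not expressible as a mask composition. -/
theorem stmt_5 :
    (∀ x : ℝ, ((5/2 : ℝ) - 2)^2 + ((5/2 : ℝ) - 3)^2 ≤ (x - 2)^2 + (x - 3)^2) ∧
    (∀ x : ℝ, ((3 : ℝ) - 2)^2 + ((3 : ℝ) - 4)^2 ≤ (x - 2)^2 + (x - 4)^2) ∧
    (5/2 : ℝ) ≠ 3 ∧
    ¬ ∃ (m f : Fin 3 → ℝ), (∀ i, m i = 0 ∨ m i = 1) ∧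
      ∀ S : Finset (Fin 3), S.Nonempty → ∀ y : ℝ,
        (∀ x : ℝ, ∑ i ∈ S, (y - ((i : ℝ) + 2))^2 ≤ ∑ i ∈ S, (x - ((i : ℝ) + 2))^2) →
        ∑ i ∈ S, m i * f i = y := by
  refine ⟨fun x => by nlinarith [sq_nonneg (x - 5/2)],
    fun x => by nlinarith [sq_nonneg (x - 3)], by norm_num, ?_⟩
  rintro ⟨m, f, -, h⟩
  have h0 := h {0} ⟨0, by simp⟩ 2 (by intro x; simp; nlinarith [sq_nonneg (x - 2)])
  have h1 := h {1} ⟨1, by simp⟩ 3 (by intro x; simp; nlinarith [sq_nonneg (x - 3)])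
  have h01 := h {0, 1} ⟨0, by simp⟩ (5/2)
    (by intro x; simp [Finset.sum_pair (show (0:Fin 3) ≠ 1 by decide)]
        nlinarith [sq_nonneg (x - 5/2)])
  simp [Finset.sum_pair (show (0:Fin 3) ≠ 1 by decide)] at h0 h1 h01
  rw [h0, h1] at h01
  norm_num at h01
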